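/- arXiv:2109.10801 — 2 statements merged into one kernel-verified Lean document; each statement's English description precedes it below -/
import Mathlib

section
/- Let V be a finite-dimensional complex vector space of dimension n, let B be a symmetric bilinear form on V, and let 0 < p ≤ n. Suppose e : Fin n → V and f : Fin n → V are two bases of V that are both orthonormal with respect to B. Then in the tensor product (⋀^p V) ⊗ (⋀^p V) one has the equality ∑_I (e_{I(0)} ∧ ⋯ ∧ e_{I(p−1)}) ⊗ (e_{I(0)} ∧ ⋯ ∧ e_{I(p−1)}) = ∑_I (f_{I(0)} ∧ ⋯ ∧ f_{I(p−1)}) ⊗ (f_{I(0)} ∧ ⋯ ∧ f_{I(p−1)}), where both sums range over all strictly monotone maps I : Fin p → Fin n. -/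
/-!
Write `f = e A` for the transition matrix `A`; orthonormality of both bases makes `A`
orthogonal. Summing over all maps `r : Fin p → Fin n` instead of strictly monotone ones,
`∑_r f_r ⊗ f_r` is the image of `∑_s e_s ⊗ e_s` under the `p`-th Kronecker power of `A`,
which is again orthogonal, so the two sums agree. Since `r ↦ e_r ⊗ e_r` vanishes on
non-injective `r` and is invariant under permuting `r` (the signs cancel), the sum over all
`r` is `p!` times the sum over strictly monotone `r`, and `p!` can be cancelled over `ℂ`.
-/

open scoped Classical TensorProduct

/-- The wedge product of a family `v : Fin p → M`, as an element of the `p`-th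
exterior power `⋀[R]^p M`. -/
noncomputable def wedge (R : Type*) [CommRing R] {M : Type*} [AddCommGroup M]
    [Module R M] (p : ℕ) (v : Fin p → M) : ⋀[R]^p M :=
  ⟨ExteriorAlgebra.ιMulti R p v,
    ExteriorAlgebra.ιMulti_range R p (Set.mem_range_self v)⟩

open Finset Matrix

namespace Matrix

variable {R ι κ : Type*} [CommSemiring R] [Fintype κ]

/-- The matrix of `A^{⊗κ}` on the basis indexed by `κ → ι`. -/
def piPow (A : Matrix ι ι R) (κ : Type*) [Fintype κ] : Matrix (κ → ι) (κ → ι) R :=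
  of fun s t => ∏ a, A (s a) (t a)

theorem piPow_apply (A : Matrix ι ι R) (s t : κ → ι) : A.piPow κ s t = ∏ a, A (s a) (t a) :=
  rfl

theorem piPow_transpose (A : Matrix ι ι R) : Aᵀ.piPow κ = (A.piPow κ)ᵀ :=
  rfl

theorem piPow_mul [Fintype ι] [DecidableEq κ] (A B : Matrix ι ι R) :
    A.piPow κ * B.piPow κ = (A * B).piPow κ := by
  ext s t
  simp only [mul_apply, piPow_apply, ← prod_mul_distrib, prod_univ_sum, Fintype.piFinset_univ]

theorem piPow_one [DecidableEq ι] [DecidableEq κ] : (1 : Matrix ι ι R).piPow κ = 1 := by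
  ext s t
  simp only [piPow_apply, one_apply, prod_boole, mem_univ, true_implies, funext_iff]

theorem piPow_mul_transpose_eq_one [Fintype ι] [DecidableEq ι] [DecidableEq κ]
    {A : Matrix ι ι R} (hA : A * Aᵀ = 1) : A.piPow κ * (A.piPow κ)ᵀ = 1 := by
  rw [← piPow_transpose, piPow_mul, hA, piPow_one]

end Matrix

theorem Module.Basis.toMatrix_mul_transpose_eq_one {R M ι : Type*} [CommRing R]
    [AddCommMonoid M] [Module R M] [Fintype ι] [DecidableEq ι] {B : M →ₗ[R] M →ₗ[R] R}
    {e f : Module.Basis ι R M} (he : ∀ i j, B (e i) (e j) = if i = j then 1 else 0)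
    (hf : ∀ i j, B (f i) (f j) = if i = j then 1 else 0) :
    e.toMatrix f * (e.toMatrix f)ᵀ = 1 := by
  have toMatrix₂_eq_one : ∀ {b : Module.Basis ι R M},
      (∀ i j, B (b i) (b j) = if i = j then 1 else 0) → LinearMap.toMatrix₂ b b B = 1 :=
    fun hb => by
      ext i j
      rw [LinearMap.toMatrix₂_apply, hb, one_apply]
  have := LinearMap.toMatrix₂_mul_basis_toMatrix e e f f B
  rw [toMatrix₂_eq_one he, toMatrix₂_eq_one hf, Matrix.mul_one] at this
  exact mul_eq_one_comm.mp this

theorem sum_tmul_self_eq_of_mul_transpose_eq_one {R M ι : Type*} [CommSemiring R]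
    [AddCommMonoid M] [Module R M] [Fintype ι] [DecidableEq ι] {C : Matrix ι ι R}
    (hC : C * Cᵀ = 1) (u : ι → M) :
    ∑ r, (∑ s, C s r • u s) ⊗ₜ[R] (∑ s, C s r • u s) = ∑ s, u s ⊗ₜ[R] u s := by
  calc ∑ r, (∑ s, C s r • u s) ⊗ₜ[R] (∑ s, C s r • u s)
      = ∑ s, ∑ t, (C * Cᵀ) s t • u s ⊗ₜ[R] u t := by
        simp only [TensorProduct.sum_tmul, TensorProduct.tmul_sum, TensorProduct.smul_tmul_smul,
          mul_apply, transpose_apply, sum_smul]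
        rw [sum_comm]
        exact (sum_congr rfl fun t _ => sum_comm).trans sum_comm
    _ = ∑ s, u s ⊗ₜ[R] u s := by
        simp [hC, one_apply]

theorem MultilinearMap.map_sum_matrix_smul {R M N ι κ : Type*} [CommSemiring R]
    [AddCommMonoid M] [Module R M] [AddCommMonoid N] [Module R N] [Fintype ι] [Fintype κ]
    [DecidableEq κ] (W : MultilinearMap R (fun _ : κ => M) N) (A : Matrix ι ι R) (e : ι → M)
    (r : κ → ι) :
    W (fun a => ∑ i, A i (r a) • e i) = ∑ s, A.piPow κ s r • W (e ∘ s) := by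
  rw [W.map_sum]
  exact sum_congr rfl fun s _ => W.map_smul_univ (fun a => A (s a) (r a)) (e ∘ s)

theorem StrictMono.eq_and_eq_one_of_comp_perm {α : Type*} [LinearOrder α] {p : ℕ}
    {I J : Fin p → α} (hI : StrictMono I) (hJ : StrictMono J) {σ : Equiv.Perm (Fin p)}
    (h : I ∘ σ = J) : I = J ∧ σ = 1 := by
  have hIJ : I = J := (hI.range_inj hJ).mp (by rw [← h, EquivLike.range_comp])
  refine ⟨hIJ, Equiv.ext fun a => hI.injective ?_⟩
  rw [Equiv.Perm.one_apply, ← Function.comp_apply (f := I), h, hIJ]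

theorem sum_eq_factorial_smul_sum_strictMono {α N : Type*} [LinearOrder α] [Fintype α]
    [AddCommMonoid N] {p : ℕ} (G : (Fin p → α) → N)
    (h0 : ∀ r, ¬ Function.Injective r → G r = 0)
    (hperm : ∀ r (σ : Equiv.Perm (Fin p)), G (r ∘ σ) = G r) :
    ∑ r, G r = p.factorial • ∑ I ∈ univ.filter (fun I : Fin p → α => StrictMono I), G I := by
  have sort_strictMono : ∀ r : Fin p → α, Function.Injective r → StrictMono (r ∘ Tuple.sort r) :=
    fun r hr => (Tuple.monotone_sort r).strictMono_of_injective (hr.comp (Tuple.sort r).injective)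
  have mem_strictMono_prod : ∀ x : (Fin p → α) × Equiv.Perm (Fin p),
      x ∈ univ.filter (fun I : Fin p → α => StrictMono I) ×ˢ univ ↔ StrictMono x.1 := by
    simp
  calc ∑ r, G r = ∑ r ∈ univ.filter Function.Injective, G r :=
        (sum_filter_of_ne fun r _ hr => not_not.mp (mt (h0 r) hr)).symm
    _ = ∑ x ∈ univ.filter (fun I : Fin p → α => StrictMono I) ×ˢ
          (univ : Finset (Equiv.Perm (Fin p))), G (x.1 ∘ x.2) := by
        symm
        refine sum_nbij' (fun x => x.1 ∘ x.2) (fun r => (r ∘ Tuple.sort r, (Tuple.sort r)⁻¹))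
          ?_ ?_ ?_ ?_ fun _ _ => rfl
        · simp only [mem_strictMono_prod, mem_filter, mem_univ, true_and]
          exact fun x hx => hx.injective.comp x.2.injective
        · simp only [mem_strictMono_prod, mem_filter, mem_univ, true_and]
          exact sort_strictMono
        · rintro ⟨I, σ⟩ hI
          rw [mem_strictMono_prod] at hI
          obtain ⟨hIJ, hσ⟩ := hI.eq_and_eq_one_of_comp_perm
            (sort_strictMono _ (hI.injective.comp σ.injective)) (σ := σ * Tuple.sort (I ∘ σ)) rfl
          simp only [Prod.mk.injEq, ← hIJ, true_and]
          exact (eq_inv_of_mul_eq_one_left hσ).symm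
        · intro r _
          ext a
          simp
    _ = ∑ I ∈ univ.filter (fun I : Fin p → α => StrictMono I), ∑ σ : Equiv.Perm (Fin p), G I := by
        rw [sum_product]
        exact sum_congr rfl fun I _ => sum_congr rfl fun σ _ => hperm I σ
    _ = p.factorial • ∑ I ∈ univ.filter (fun I : Fin p → α => StrictMono I), G I := by
        simp only [sum_const, card_univ, Fintype.card_perm, Fintype.card_fin, smul_sum]

theorem AlternatingMap.sum_tmul_self_eq_factorial_smul {R M N ι : Type*} [CommRing R]
    [AddCommMonoid M] [Module R M] [AddCommGroup N] [Module R N] [LinearOrder ι] [Fintype ι]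
    {p : ℕ} (W : M [⋀^Fin p]→ₗ[R] N) (x : ι → M) :
    ∑ r, W (x ∘ r) ⊗ₜ[R] W (x ∘ r) =
      p.factorial • ∑ I ∈ univ.filter (fun I : Fin p → ι => StrictMono I),
        W (x ∘ I) ⊗ₜ[R] W (x ∘ I) := by
  refine sum_eq_factorial_smul_sum_strictMono _ (fun r hr => ?_) fun r σ => ?_
  · obtain ⟨a, b, hab, hne⟩ := Function.not_injective_iff.mp hr
    rw [W.map_eq_zero_of_eq _ (congrArg x hab) hne, TensorProduct.zero_tmul]
  · rw [← Function.comp_assoc, W.map_perm, Units.smul_def, ← TensorProduct.smul_tmul',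
      TensorProduct.tmul_smul, smul_smul, ← Units.val_mul, Int.units_mul_self, Units.val_one,
      one_smul]

theorem AlternatingMap.sum_strictMono_tmul_self_eq_of_mul_transpose_eq_one {K M N ι : Type*}
    [Field K] [CharZero K] [AddCommMonoid M] [Module K M] [AddCommGroup N] [Module K N]
    [LinearOrder ι] [Fintype ι] {p : ℕ} (W : M [⋀^Fin p]→ₗ[K] N) {A : Matrix ι ι K}
    (hA : A * Aᵀ = 1) (e : ι → M) :
    ∑ I ∈ univ.filter (fun I : Fin p → ι => StrictMono I),
        W (fun a => ∑ i, A i (I a) • e i) ⊗ₜ[K] W (fun a => ∑ i, A i (I a) • e i) =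
      ∑ I ∈ univ.filter (fun I : Fin p → ι => StrictMono I), W (e ∘ I) ⊗ₜ[K] W (e ∘ I) := by
  set v : ι → M := fun j => ∑ i, A i j • e i
  have sum_all_eq : ∑ r, W (v ∘ r) ⊗ₜ[K] W (v ∘ r) = ∑ r, W (e ∘ r) ⊗ₜ[K] W (e ∘ r) := by
    simp only [v, Function.comp_def, ← W.coe_multilinearMap,
      W.toMultilinearMap.map_sum_matrix_smul]
    exact sum_tmul_self_eq_of_mul_transpose_eq_one (piPow_mul_transpose_eq_one hA) _
  rw [W.sum_tmul_self_eq_factorial_smul, W.sum_tmul_self_eq_factorial_smul,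
    ← Nat.cast_smul_eq_nsmul K, ← Nat.cast_smul_eq_nsmul K] at sum_all_eq
  exact smul_right_injective _ (Nat.cast_ne_zero.mpr p.factorial_ne_zero) sum_all_eq

theorem invariant_vector_basis_independent_general {V : Type*} [AddCommGroup V] [Module ℂ V]
    {n p : ℕ}
    (B : V →ₗ[ℂ] V →ₗ[ℂ] ℂ)
    (e f : Module.Basis (Fin n) ℂ V)
    (he : ∀ i j, B (e i) (e j) = if i = j then 1 else 0)
    (hf : ∀ i j, B (f i) (f j) = if i = j then 1 else 0) :
    (∑ I ∈ Finset.univ.filter (fun I : Fin p → Fin n => StrictMono I),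
        wedge ℂ p (fun a => e (I a)) ⊗ₜ[ℂ] wedge ℂ p (fun a => e (I a))) =
      ∑ I ∈ Finset.univ.filter (fun I : Fin p → Fin n => StrictMono I),
        wedge ℂ p (fun a => f (I a)) ⊗ₜ[ℂ] wedge ℂ p (fun a => f (I a)) := by
  have f_eq : ∀ j, f j = ∑ i, e.toMatrix f i j • e i := fun j =>
    (e.sum_toMatrix_smul_self f j).symm
  simp only [f_eq]
  exact ((exteriorPower.ιMulti ℂ p).sum_strictMono_tmul_self_eq_of_mul_transpose_eq_one
    (e.toMatrix_mul_transpose_eq_one he hf) e).symm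

/-- If `e` and `f` are two bases of an `n`-dimensional complex vector space `V`, both
orthonormal for a symmetric bilinear form `B`, then
`∑_I e_I ⊗ e_I = ∑_I f_I ⊗ f_I` in `(⋀^p V) ⊗ (⋀^p V)`, where the sums range over all
strictly monotone `I : Fin p → Fin n` and `e_I = e_{I 0} ∧ ⋯ ∧ e_{I (p-1)}`. -/
theorem invariant_vector_basis_independent {V : Type*} [AddCommGroup V] [Module ℂ V]
    [FiniteDimensional ℂ V] {n p : ℕ} (hp : 0 < p) (hpn : p ≤ n)
    (hdim : Module.finrank ℂ V = n)
    (B : V →ₗ[ℂ] V →ₗ[ℂ] ℂ) (hsymm : ∀ v w, B v w = B w v)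
    (e f : Module.Basis (Fin n) ℂ V)
    (he : ∀ i j, B (e i) (e j) = if i = j then 1 else 0)
    (hf : ∀ i j, B (f i) (f j) = if i = j then 1 else 0) :
    (∑ I ∈ Finset.univ.filter (fun I : Fin p → Fin n => StrictMono I),
        wedge ℂ p (fun a => e (I a)) ⊗ₜ[ℂ] wedge ℂ p (fun a => e (I a))) =
      ∑ I ∈ Finset.univ.filter (fun I : Fin p → Fin n => StrictMono I),
        wedge ℂ p (fun a => f (I a)) ⊗ₜ[ℂ] wedge ℂ p (fun a => f (I a)) :=
  invariant_vector_basis_independent_general B e f he hf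
end

section
/- Let V be a finite-dimensional complex vector space, B a symmetric bilinear form on V, W a subspace of V, and p a natural number with p ≤ dim W. Then the rank of the restriction of B to W is at least p if and only if there exist families v, w : Fin p → W such that the determinant of the p×p matrix with (i,j) entry B(v i, w j) is nonzero. -/
/-!
Both conditions say that some `p` of the functionals `B (v i)` restricted to `W` are linearly
independent. For the rank this is what `p ≤ finrank (range _)` means. For the determinant,
independent functionals admit a dual family `w` with `φ i (w j) = δ i j`, so the Gram matrix is
the identity; conversely, the rows of a nonsingular Gram matrix are independent and they are the
images of the functionals under evaluation at the `w j`.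
-/

/-- The rank of the restriction of a bilinear form `B` on `V` to a subspace `W`:
the rank of the linear map `W → W*` sending `w` to `w' ↦ B w w'`. -/
noncomputable def bilinRestrictRank {K V : Type*} [Field K] [AddCommGroup V] [Module K V]
    (B : V →ₗ[K] V →ₗ[K] K) (W : Submodule K V) : ℕ :=
  Module.finrank K (LinearMap.range (B.compl₁₂ W.subtype W.subtype))

open Module

section

variable {K M N : Type*} [Field K] [AddCommGroup M] [Module K M] [AddCommGroup N] [Module K N]

theorem LinearMap.le_finrank_range_iff_exists_linearIndependent [FiniteDimensional K M]
    (f : M →ₗ[K] N) {n : ℕ} :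
    n ≤ finrank K (LinearMap.range f) ↔ ∃ v : Fin n → M, LinearIndependent K (f ∘ v) := by
  have hrange (v : Fin n → M) :
      LinearIndependent K (f ∘ v) ↔ LinearIndependent K (f.rangeRestrict ∘ v) := by
    rw [← (LinearMap.range f).subtype.linearIndependent_iff (Submodule.ker_subtype _)]
    rfl
  simp_rw [hrange]
  constructor
  · intro hn
    obtain ⟨u, hu⟩ := exists_linearIndependent_of_le_finrank hn
    obtain ⟨v, rfl⟩ := f.surjective_rangeRestrict.comp_left u
    exact ⟨v, hu⟩
  · rintro ⟨v, hv⟩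
    simpa using hv.fintype_card_le_finrank

theorem Module.Dual.pi_surjective_of_linearIndependent {ι : Type*} [Finite ι]
    {φ : ι → Dual K M} (hφ : LinearIndependent K φ) : Function.Surjective (LinearMap.pi φ) := by
  have hfun : LinearIndependent K fun i => ⇑(φ i) :=
    hφ.map' (LinearMap.ltoFun K M K K) (LinearMap.ker_eq_bot_of_injective DFunLike.coe_injective)
  rw [← span_flip_eq_top_iff_linearIndependent] at hfun
  rw [← LinearMap.range_eq_top, ← hfun]
  exact (Submodule.span_eq (LinearMap.range (LinearMap.pi φ))).symm

theorem Module.Dual.linearIndependent_iff_exists_det_ne_zero {ι : Type*} [Fintype ι]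
    [DecidableEq ι] {φ : ι → Dual K M} :
    LinearIndependent K φ ↔ ∃ w : ι → M, (Matrix.of fun i j => φ i (w j)).det ≠ 0 := by
  constructor
  · intro hφ
    choose w hw using fun j => pi_surjective_of_linearIndependent hφ (Pi.single j 1)
    refine ⟨w, ?_⟩
    have hgram : (Matrix.of fun i j => φ i (w j)) = 1 := by
      ext i j
      simpa [Matrix.one_apply, Pi.single_apply, eq_comm] using congr_fun (hw j) i
    simp [hgram]
  · rintro ⟨w, hw⟩
    exact .of_comp (LinearMap.pi fun j => Dual.eval K M (w j))
      (Matrix.linearIndependent_rows_of_det_ne_zero hw)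

end

theorem rank_restrict_ge_iff_exists_gram_det_ne_zero_general {V : Type*} [AddCommGroup V]
    [Module ℂ V] [FiniteDimensional ℂ V]
    (B : V →ₗ[ℂ] V →ₗ[ℂ] ℂ)
    (W : Submodule ℂ V) (p : ℕ) :
    p ≤ bilinRestrictRank B W ↔
      ∃ v w : Fin p → W,
        (Matrix.of fun i j => B (v i : V) (w j : V)).det ≠ 0 := by
  rw [bilinRestrictRank, LinearMap.le_finrank_range_iff_exists_linearIndependent]
  simp_rw [Dual.linearIndependent_iff_exists_det_ne_zero]
  rfl

/-- For a symmetric bilinear form `B` on a finite-dimensional complex vector space,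
a subspace `W` and `p ≤ dim W`, the restriction of `B` to `W` has rank at least `p`
if and only if there are families `v w : Fin p → W` with nonzero Gram determinant
`det (B (v i) (w j))_{i,j}`. -/
theorem rank_restrict_ge_iff_exists_gram_det_ne_zero {V : Type*} [AddCommGroup V]
    [Module ℂ V] [FiniteDimensional ℂ V]
    (B : V →ₗ[ℂ] V →ₗ[ℂ] ℂ) (hsymm : ∀ v w, B v w = B w v)
    (W : Submodule ℂ V) (p : ℕ) (hp : p ≤ Module.finrank ℂ W) :
    p ≤ bilinRestrictRank B W ↔
      ∃ v w : Fin p → W,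
        (Matrix.of fun i j => B (v i : V) (w j : V)).det ≠ 0 :=
  rank_restrict_ge_iff_exists_gram_det_ne_zero_general B W p
end
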